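/- Define for r, s > 0 with A := r + s - √s·√(r+s) and r + s ≤ 1: t*(r,s) = √(r(1-r-s)) if 2(r+s)(r+s+√s·√(r+s)) ≤ r, and t*(r,s) = √(2A) - A otherwise. If A < 1/2, then t*(r,s) > A. -/

import Mathlib

noncomputable def tstar (r s : ℝ) : ℝ :=
  if 2 * (r + s) * (r + s + Real.sqrt s * Real.sqrt (r + s)) ≤ r then
    Real.sqrt (r * (1 - r - s))
  else
    Real.sqrt (2 * (r + s - Real.sqrt s * Real.sqrt (r + s)))
      - (r + s - Real.sqrt s * Real.sqrt (r + s))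

/-!
Write `A = r + s - √s √(r+s)`; then `0 < A ≤ r`. In the first branch of `tstar` the
hypothesis forces `2 (r+s)² < r + s`, so `r + s < 1/2` and `r² < r (1 - r - s)`, giving
`t* > r ≥ A`. In the second branch `0 < 2A < 1`, so `√(2A) > 2A`, i.e. `√(2A) - A > A`.
-/

open Real

lemma sqrt_mul_sqrt_add_lt {r s : ℝ} (hr : 0 < r) (hs : 0 ≤ s) :
    √s * √(r + s) < r + s := by
  have hsq : √s < √(r + s) := sqrt_lt_sqrt hs (by linarith)
  calc √s * √(r + s) < √(r + s) * √(r + s) :=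
        mul_lt_mul_of_pos_right hsq (hsq.trans_le' (sqrt_nonneg s))
    _ = r + s := mul_self_sqrt (by linarith)

lemma le_sqrt_mul_sqrt_add {r s : ℝ} (hr : 0 ≤ r) (hs : 0 ≤ s) :
    s ≤ √s * √(r + s) :=
  calc s = √s * √s := (mul_self_sqrt hs).symm
    _ ≤ √s * √(r + s) :=
        mul_le_mul_of_nonneg_left (sqrt_le_sqrt (by linarith)) (sqrt_nonneg s)

lemma add_lt_half_of_two_mul_add_mul_le {r s B : ℝ} (hs : 0 < s) (hB : 0 ≤ B)
    (h : 2 * (r + s) * (r + s + B) ≤ r) : r + s < 1 / 2 := by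
  by_contra! hge
  nlinarith [mul_nonneg (by linarith : 0 ≤ r + s) hB,
    mul_nonneg (by linarith : 0 ≤ r + s) (by linarith : 0 ≤ r + s - 1 / 2)]

lemma lt_sqrt_mul_one_sub_add {r s : ℝ} (hr : 0 < r) (hs : 0 ≤ s) (h : r + s < 1 / 2) :
    r < √(r * (1 - r - s)) := by
  rw [lt_sqrt hr.le, sq]
  exact mul_lt_mul_of_pos_left (by linarith) hr

theorem tstar_gt_A_general (r s : ℝ) (hr : 0 < r) (hs : 0 < s)
    (hA : r + s - Real.sqrt s * Real.sqrt (r + s) < 1 / 2) :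
    tstar r s > r + s - Real.sqrt s * Real.sqrt (r + s) := by
  have hA_pos : 0 < r + s - √s * √(r + s) := sub_pos.2 (sqrt_mul_sqrt_add_lt hr hs.le)
  have hA_le : r + s - √s * √(r + s) ≤ r := by
    linarith [le_sqrt_mul_sqrt_add hr.le hs.le]
  unfold tstar
  split_ifs with h
  · have hsum := add_lt_half_of_two_mul_add_mul_le hs (by positivity) h
    linarith [lt_sqrt_mul_one_sub_add hr hs.le hsum]
  · have h2A : 2 * (r + s - √s * √(r + s)) < √(2 * (r + s - √s * √(r + s))) :=
      lt_sqrt_self_iff.2 ⟨by positivity, by linarith⟩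
    linarith

theorem tstar_gt_A (r s : ℝ) (hr : 0 < r) (hs : 0 < s) (hrs : r + s ≤ 1)
    (hA : r + s - Real.sqrt s * Real.sqrt (r + s) < 1 / 2) :
    tstar r s > r + s - Real.sqrt s * Real.sqrt (r + s) :=
  tstar_gt_A_general r s hr hs hA
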